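/- arXiv:1508.01935 — 3 statements merged into one kernel-verified Lean document; each statement's English description precedes it below -/
import Mathlib

section
/- Let M be a connected matroid and S a connected subset of M, and write M/S = ⊕_i A_i with each A_i connected in M/S. Then each A_i ∪ S is connected in M. -/
/-!
Let `(T, U)` be a separation of `S ∪ A`. Skewness passes to subsets, so `(T ∩ S, U ∩ S)` is a
separation of `S`; as `S` is connected, it lies on one side, say `S ⊆ U`, and then `T ⊆ A`.
If `T = A`, then `U = S`, so `A` and `S` are skew, and the summand equation turns this into a
separation `(A, E \ A)` of `M`. Otherwise `T` and `S` are skew, so in `M/S` the rank of `T` is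
`rk T` and that of `A \ T` is `rk U - rk S`: `T` separates `A` in `M/S`.
-/

def RankAxioms {α : Type*} [DecidableEq α] (E : Finset α) (rk : Finset α → ℕ) : Prop :=
  rk ∅ = 0 ∧
  (∀ F ⊆ E, ∀ x ∈ E, rk (insert x F) = rk F ∨ rk (insert x F) = rk F + 1) ∧
  (∀ F ⊆ E, ∀ x ∈ E, ∀ y ∈ E,
    rk (insert x F) = rk F → rk (insert y F) = rk F → rk (insert x (insert y F)) = rk F)

/-- Connectedness of the matroid with rank function `rk` restricted to ground set
`G`: no proper nonempty subset `T ⊆ G` satisfies `rk T + rk (G \ T) = rk G`. -/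
def ConnOn {α : Type*} [DecidableEq α] (rk : Finset α → ℕ) (G : Finset α) : Prop :=
  ∀ T ⊆ G, T.Nonempty → T ≠ G → rk T + rk (G \ T) ≠ rk G

namespace RankAxioms

variable {α : Type*} [DecidableEq α] {E : Finset α} {rk : Finset α → ℕ}

theorem le_rk_insert (h : RankAxioms E rk) {F : Finset α} (hF : F ⊆ E) {x : α} (hx : x ∈ E) :
    rk F ≤ rk (insert x F) := by
  rcases h.2.1 F hF x hx with h' | h' <;> omega

theorem rk_insert_le (h : RankAxioms E rk) {F : Finset α} (hF : F ⊆ E) {x : α} (hx : x ∈ E) :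
    rk (insert x F) ≤ rk F + 1 := by
  rcases h.2.1 F hF x hx with h' | h' <;> omega

theorem rk_le_rk_union (h : RankAxioms E rk) {F D : Finset α} (hF : F ⊆ E) (hD : D ⊆ E) :
    rk F ≤ rk (F ∪ D) := by
  induction D using Finset.induction_on with
  | empty => simp
  | @insert d D _ ih =>
    rw [Finset.insert_subset_iff] at hD
    rw [Finset.union_insert]
    exact (ih hD.2).trans (h.le_rk_insert (Finset.union_subset hF hD.2) hD.1)

theorem rk_mono (h : RankAxioms E rk) {F G : Finset α} (hFG : F ⊆ G) (hG : G ⊆ E) :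
    rk F ≤ rk G := by
  simpa [Finset.union_sdiff_of_subset hFG] using
    h.rk_le_rk_union (hFG.trans hG) (Finset.sdiff_subset.trans hG : G \ F ⊆ E)

theorem rk_insert_union_eq (h : RankAxioms E rk) {F D : Finset α} (hF : F ⊆ E) (hD : D ⊆ E)
    {x : α} (hx : x ∈ E) (hxF : rk (insert x F) = rk F) :
    rk (insert x (F ∪ D)) = rk (F ∪ D) := by
  induction D using Finset.induction_on with
  | empty => simpa
  | @insert d D _ ih =>
    rw [Finset.insert_subset_iff] at hD
    obtain ⟨hd, hD⟩ := hD
    have hFD : F ∪ D ⊆ E := Finset.union_subset hF hD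
    have hx' := ih hD
    rw [Finset.union_insert]
    rcases h.2.1 (F ∪ D) hFD d hd with hd' | hd'
    · rw [hd']
      exact h.2.2 (F ∪ D) hFD x hx d hd hx' hd'
    · have h1 : rk (insert x (insert d (F ∪ D))) ≤ rk (insert x (F ∪ D)) + 1 := by
        rw [Finset.insert_comm]
        exact h.rk_insert_le (Finset.insert_subset hx hFD) hd
      have h2 := h.le_rk_insert (Finset.insert_subset hd hFD) hx
      omega

theorem rk_insert_add_le (h : RankAxioms E rk) {A B : Finset α} (hAB : A ⊆ B) (hB : B ⊆ E)
    {x : α} (hx : x ∈ E) :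
    rk (insert x B) + rk A ≤ rk (insert x A) + rk B := by
  rcases h.2.1 A (hAB.trans hB) x hx with hxA | hxA
  · have := h.rk_insert_union_eq (hAB.trans hB) hB hx hxA
    rw [Finset.union_eq_right.mpr hAB] at this
    omega
  · have := h.rk_insert_le hB hx
    omega

theorem rk_union_add_le (h : RankAxioms E rk) {A B D : Finset α} (hAB : A ⊆ B) (hB : B ⊆ E)
    (hD : D ⊆ E) :
    rk (B ∪ D) + rk A ≤ rk (A ∪ D) + rk B := by
  induction D using Finset.induction_on with
  | empty => simp [Nat.add_comm]
  | @insert d D _ ih =>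
    rw [Finset.insert_subset_iff] at hD
    have := h.rk_insert_add_le (Finset.union_subset_union hAB le_rfl)
      (Finset.union_subset hB hD.2) hD.1
    have := ih hD.2
    rw [Finset.union_insert, Finset.union_insert]
    omega

theorem rk_union_add_rk_inter_le (h : RankAxioms E rk) {X Y : Finset α} (hX : X ⊆ E)
    (hY : Y ⊆ E) :
    rk (X ∪ Y) + rk (X ∩ Y) ≤ rk X + rk Y := by
  have := h.rk_union_add_le (Finset.inter_subset_right (s₁ := X)) hY
    (Finset.sdiff_subset.trans hX : X \ Y ⊆ E)
  rw [Finset.union_sdiff_self_eq_union, Finset.union_comm Y,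
    show X ∩ Y ∪ X \ Y = X by grind] at this
  omega

theorem rk_union_le_add (h : RankAxioms E rk) {X Y : Finset α} (hX : X ⊆ E) (hY : Y ⊆ E) :
    rk (X ∪ Y) ≤ rk X + rk Y :=
  le_of_add_le_left (h.rk_union_add_rk_inter_le hX hY)

theorem add_le_rk_union_of_subset_left (h : RankAxioms E rk) {X Y X' : Finset α} (hX : X ⊆ E)
    (hY : Y ⊆ E) (hXY : rk X + rk Y ≤ rk (X ∪ Y)) (hX' : X' ⊆ X) :
    rk X' + rk Y ≤ rk (X' ∪ Y) := by
  have hsub := h.rk_union_add_rk_inter_le (Finset.union_subset (hX'.trans hX) hY) hX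
  rw [show X' ∪ Y ∪ X = X ∪ Y by grind] at hsub
  have := h.rk_mono (show X' ⊆ (X' ∪ Y) ∩ X by grind) (Finset.inter_subset_right.trans hX)
  omega

theorem rk_add_eq_of_subset (h : RankAxioms E rk) {X Y X' Y' : Finset α} (hX : X ⊆ E)
    (hY : Y ⊆ E) (hXY : rk X + rk Y = rk (X ∪ Y)) (hX' : X' ⊆ X) (hY' : Y' ⊆ Y) :
    rk X' + rk Y' = rk (X' ∪ Y') := by
  have h1 := h.add_le_rk_union_of_subset_left hX hY hXY.le hX'
  rw [add_comm, Finset.union_comm] at h1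
  have h2 := h.add_le_rk_union_of_subset_left hY (hX'.trans hX) h1 hY'
  rw [add_comm, Finset.union_comm] at h2
  exact le_antisymm h2 (h.rk_union_le_add (hX'.trans hX) (hY'.trans hY))

end RankAxioms

theorem ConnOn.disjoint_or_subset {α : Type*} [DecidableEq α] {E S G T : Finset α}
    {rk : Finset α → ℕ} (hS : ConnOn rk S) (hrk : RankAxioms E rk) (hSG : S ⊆ G)
    (hG : G ⊆ E) (hT : T ⊆ G) (hsep : rk T + rk (G \ T) = rk G) :
    Disjoint T S ∨ S ⊆ T := by
  have hskew := hrk.rk_add_eq_of_subset (hT.trans hG) (Finset.sdiff_subset.trans hG)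
    (by rwa [Finset.union_sdiff_of_subset hT]) (Finset.inter_subset_left (s₂ := S))
    (Finset.inter_subset_left (s₂ := S))
  rw [show T ∩ S ∪ (G \ T) ∩ S = S by grind,
    show (G \ T) ∩ S = S \ (T ∩ S) by grind] at hskew
  by_contra! hc
  exact hS (T ∩ S) Finset.inter_subset_right (Finset.not_disjoint_iff_nonempty_inter.mp hc.1)
    (fun h => hc.2 (Finset.inter_eq_right.mp h)) hskew

section Summand

variable {α : Type*} [DecidableEq α] {E S A : Finset α} {rk : Finset α → ℕ}

theorem rk_add_rk_sdiff_eq_of_summand (hrk : RankAxioms E rk) (hS : S ⊆ E) (hA : A ⊆ E \ S)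
    (hsummand : ((rk (A ∪ S) - rk S) + (rk (((E \ S) \ A) ∪ S) - rk S)) = rk E - rk S)
    (hskew : rk A + rk S = rk (S ∪ A)) :
    rk A + rk (E \ A) = rk E := by
  rw [show (E \ S) \ A ∪ S = E \ A by grind, Finset.union_comm, ← hskew] at hsummand
  have := hrk.rk_mono (show S ⊆ E \ A by grind) Finset.sdiff_subset
  have := hrk.rk_mono hS subset_rfl
  omega

theorem rk_add_rk_sdiff_ne_of_subset_summand (hrk : RankAxioms E rk) (hS : S ⊆ E)
    (hA : A ⊆ E \ S) (hMconn : ConnOn rk E)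
    (hsummand : ((rk (A ∪ S) - rk S) + (rk (((E \ S) \ A) ∪ S) - rk S)) = rk E - rk S)
    (hAconn : ConnOn (fun T => rk (T ∪ S) - rk S) A)
    {T : Finset α} (hTA : T ⊆ A) (hT : T.Nonempty) (hTSA : T ≠ S ∪ A) :
    rk T + rk ((S ∪ A) \ T) ≠ rk (S ∪ A) := by
  intro hsep
  have hAE : A ⊆ E := hA.trans Finset.sdiff_subset
  have hSA : Disjoint S A := Finset.disjoint_sdiff.mono_right hA
  by_cases hTA' : T = A
  · subst hTA'
    rw [Finset.union_sdiff_right, Finset.sdiff_eq_self_of_disjoint hSA] at hsep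
    have hSne : S.Nonempty := Finset.nonempty_iff_ne_empty.mpr (by rintro rfl; simp at hTSA)
    refine hMconn T hAE hT (fun hTE => ?_)
      (rk_add_rk_sdiff_eq_of_summand hrk hS hA hsummand hsep)
    obtain ⟨s, hs⟩ := hSne
    exact Finset.disjoint_left.mp hSA hs (hTE ▸ hS hs)
  · have hAT : A \ T ∪ S ⊆ E := Finset.union_subset (Finset.sdiff_subset.trans hAE) hS
    rw [show (S ∪ A) \ T = A \ T ∪ S by grind,
      show S ∪ A = T ∪ (A \ T ∪ S) by grind] at hsep
    have hskew := hrk.rk_add_eq_of_subset (hTA.trans hAE) hAT hsep subset_rfl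
      Finset.subset_union_right
    have := hrk.rk_mono Finset.subset_union_right hAT
    refine hAconn T hTA hT hTA' ?_
    show rk (T ∪ S) - rk S + (rk (A \ T ∪ S) - rk S) = rk (A ∪ S) - rk S
    rw [show A ∪ S = T ∪ (A \ T ∪ S) by grind]
    omega

end Summand

/-- If `M` is connected, `S` is a connected subset, and `A` is a connected direct
summand of the contraction `M/S` (whose rank function is `T ↦ rk (T ∪ S) − rk S`
on ground set `E \ S`), then `A ∪ S` is connected in `M`. -/
theorem summand_union_connected {α : Type*} [DecidableEq α]
    (E S A : Finset α) (rk : Finset α → ℕ)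
    (hrk : RankAxioms E rk) (hS : S ⊆ E) (hA : A ⊆ E \ S)
    (hMconn : ConnOn rk E)
    (hSconn : ConnOn rk S)
    (hsummand :
      ((rk (A ∪ S) - rk S) + (rk (((E \ S) \ A) ∪ S) - rk S)) = rk E - rk S)
    (hAconn : ConnOn (fun T => rk (T ∪ S) - rk S) A) :
    ConnOn rk (S ∪ A) := by
  have hSAE : S ∪ A ⊆ E := Finset.union_subset hS (hA.trans Finset.sdiff_subset)
  intro T hT hTne hTSA hsep
  rcases hSconn.disjoint_or_subset hrk Finset.subset_union_left hSAE hT hsep with hTS | hST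
  · exact rk_add_rk_sdiff_ne_of_subset_summand hrk hS hA hMconn hsummand hAconn
      (hTS.left_le_of_le_sup_left hT) hTne hTSA hsep
  · have hUA : (S ∪ A) \ T ⊆ A :=
      (Finset.sdiff_disjoint.mono_right hST).left_le_of_le_sup_left Finset.sdiff_subset
    have hUne : ((S ∪ A) \ T).Nonempty :=
      Finset.sdiff_nonempty.mpr fun h => hTSA (hT.antisymm h)
    have hUSA : (S ∪ A) \ T ≠ S ∪ A := fun h =>
      hTne.ne_empty ((Finset.sdiff_eq_self_iff_disjoint.mp h).symm.eq_bot_of_le hT)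
    refine rk_add_rk_sdiff_ne_of_subset_summand hrk hS hA hMconn hsummand hAconn
      hUA hUne hUSA ?_
    rwa [Finset.sdiff_sdiff_eq_self hT, add_comm]
end

section
/- Let M be a matroid on E, 𝔖 ⊆ P(E) a collection of subsets, and Z ∈ 𝔖. Then ec_𝔖(M) − ec_{𝔖∖{Z}}(M) = a_𝔖(Z)·b_𝔖(Z), where a and b are defined via the Möbius function of the poset 𝔖 ordered by inclusion. -/
/-- The Möbius function of the inclusion poset on the collection `𝔖`. -/
def mob {α : Type*} [DecidableEq α] (𝔖 : Finset (Finset α)) (T S : Finset α) : ℤ :=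
  if T = S then 1
  else if T ∈ 𝔖 ∧ S ∈ 𝔖 ∧ T ⊆ S then
    - ∑ U ∈ (𝔖.filter fun U => T ⊆ U ∧ U ⊂ S).attach, mob 𝔖 T U.1
  else 0
termination_by S.card
decreasing_by
  exact Finset.card_lt_card (Finset.mem_filter.mp U.2).2.2

/-- `c(S) = #S − rk S`. -/
def cFn {α : Type*} (rk : Finset α → ℕ) (S : Finset α) : ℤ :=
  (S.card : ℤ) - rk S

/-- `a_𝔖(S) = Σ_{T ∈ 𝔖} c(T) μ_𝔖(T,S)`. -/
def aFn {α : Type*} [DecidableEq α] (𝔖 : Finset (Finset α)) (rk : Finset α → ℕ)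
    (S : Finset α) : ℤ :=
  ∑ T ∈ 𝔖, cFn rk T * mob 𝔖 T S

/-- `b_𝔖(T) = Σ_{S ∈ 𝔖} (k − rk S) μ_𝔖(T,S)`. -/
def bFn {α : Type*} [DecidableEq α] (𝔖 : Finset (Finset α)) (rk : Finset α → ℕ)
    (k : ℕ) (T : Finset α) : ℤ :=
  ∑ S ∈ 𝔖, ((k : ℤ) - rk S) * mob 𝔖 T S

/-- `ec_𝔖(M) = Σ_{S,T ∈ 𝔖} c(T)(k − rk S) μ_𝔖(T,S)`. -/
def ecFn {α : Type*} [DecidableEq α] (𝔖 : Finset (Finset α)) (rk : Finset α → ℕ)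
    (k : ℕ) : ℤ :=
  ∑ S ∈ 𝔖, ∑ T ∈ 𝔖, cFn rk T * ((k : ℤ) - rk S) * mob 𝔖 T S

/-!
For `T, S ≠ Z` the Möbius function of `𝔖 ∖ {Z}` is `μ(T,S) - μ(T,Z) μ(Z,S)`: as a function of `S`
this takes the value `1` at `S = T` and its partial sums over `{U ∈ 𝔖 ∖ {Z} | U ⊆ S}` vanish, and
these two properties characterise a row of the Möbius function of any collection. Substituting it
into the double sum defining `ec`, whose summand then vanishes at `S = Z` and at `T = Z`, splits
off the product `(∑_T c(T) μ(T,Z)) (∑_S (k - rk S) μ(Z,S)) = a(Z) b(Z)`.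
-/

section Mobius

open Finset

variable {α : Type*} [DecidableEq α] {𝔖 : Finset (Finset α)} {T S Z : Finset α}

lemma mob_self (𝔖 : Finset (Finset α)) (T : Finset α) : mob 𝔖 T T = 1 := by
  rw [mob, if_pos rfl]

lemma mob_eq_zero (hTS : T ≠ S) (h : ¬(T ∈ 𝔖 ∧ S ∈ 𝔖 ∧ T ⊆ S)) : mob 𝔖 T S = 0 := by
  rw [mob, if_neg hTS, if_neg h]

lemma mob_of_not_subset (h : ¬T ⊆ S) : mob 𝔖 T S = 0 :=
  mob_eq_zero (fun hTS => h hTS.subset) fun hmem => h hmem.2.2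

lemma mob_eq_neg_sum (hT : T ∈ 𝔖) (hS : S ∈ 𝔖) (hTS : T ⊆ S) (hne : T ≠ S) :
    mob 𝔖 T S = -∑ U ∈ 𝔖 with T ⊆ U ∧ U ⊂ S, mob 𝔖 T U := by
  rw [mob, if_neg hne, if_pos ⟨hT, hS, hTS⟩, sum_attach]

lemma mob_mul_mob_eq_zero (hTZ : T ≠ Z) : mob 𝔖 T Z * mob 𝔖 Z T = 0 := by
  by_cases hsub : T ⊆ Z
  · rw [mob_of_not_subset fun h => hTZ (subset_antisymm hsub h), mul_zero]
  · rw [mob_of_not_subset hsub, zero_mul]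

lemma sum_filter_subset_eq_self_add (hS : S ∈ 𝔖) (ν : Finset α → ℤ) :
    ∑ U ∈ 𝔖 with U ⊆ S, ν U = ν S + ∑ U ∈ 𝔖 with U ⊂ S, ν U := by
  have hsplit : {U ∈ 𝔖 | U ⊆ S} = insert S {U ∈ 𝔖 | U ⊂ S} := by
    ext U
    simp only [mem_filter, mem_insert]
    constructor
    · rintro ⟨hU, hsub⟩
      rcases hsub.eq_or_ssubset with rfl | hss
      · exact Or.inl rfl
      · exact Or.inr ⟨hU, hss⟩
    · rintro (rfl | ⟨hU, hss⟩)
      · exact ⟨hS, subset_rfl⟩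
      · exact ⟨hU, hss.subset⟩
  rw [hsplit, sum_insert (by simp)]

lemma sum_mob_eq_zero (hS : S ∈ 𝔖) (hTS : T ≠ S) :
    ∑ U ∈ 𝔖 with U ⊆ S, mob 𝔖 T U = 0 := by
  by_cases hT : T ∈ 𝔖 ∧ T ⊆ S
  · have hinterval : ∑ U ∈ 𝔖 with U ⊂ S, mob 𝔖 T U = ∑ U ∈ 𝔖 with T ⊆ U ∧ U ⊂ S, mob 𝔖 T U := by
      refine (sum_subset (fun U hU => ?_) fun U hU hU' => ?_).symm
      · simp only [mem_filter] at hU ⊢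
        exact ⟨hU.1, hU.2.2⟩
      · simp only [mem_filter] at hU hU'
        exact mob_of_not_subset fun hTU => hU' ⟨hU.1, hTU, hU.2⟩
    rw [sum_filter_subset_eq_self_add hS, hinterval, mob_eq_neg_sum hT.1 hS hT.2 hTS,
      neg_add_cancel]
  · refine sum_eq_zero fun U hU => ?_
    obtain ⟨hU, hUS⟩ := mem_filter.mp hU
    exact mob_eq_zero (by rintro rfl; exact hT ⟨hU, hUS⟩)
      fun ⟨hT', _, hTU⟩ => hT ⟨hT', hTU.trans hUS⟩

theorem eq_mob_of_sum_eq_zero (ν : Finset α → ℤ) (hself : ν T = 1)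
    (hsum : ∀ S ∈ 𝔖, T ≠ S → ∑ U ∈ 𝔖 with U ⊆ S, ν U = 0) :
    ∀ S ∈ 𝔖, ν S = mob 𝔖 T S := by
  intro S
  induction S using strongInduction with
  | H S ih =>
    intro hS
    rcases eq_or_ne T S with rfl | hTS
    · rw [hself, mob_self]
    have hstrict : ∑ U ∈ 𝔖 with U ⊂ S, ν U = ∑ U ∈ 𝔖 with U ⊂ S, mob 𝔖 T U :=
      sum_congr rfl fun U hU =>
        ih U (mem_filter.mp hU).2 (mem_filter.mp hU).1
    have hν := hsum S hS hTS
    have hμ := sum_mob_eq_zero (𝔖 := 𝔖) hS hTS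
    rw [sum_filter_subset_eq_self_add hS, hstrict] at hν
    rw [sum_filter_subset_eq_self_add hS] at hμ
    linarith

theorem mob_erase (hT : T ∈ 𝔖.erase Z) (hS : S ∈ 𝔖.erase Z) :
    mob (𝔖.erase Z) T S = mob 𝔖 T S - mob 𝔖 T Z * mob 𝔖 Z S := by
  have hTZ := ne_of_mem_erase hT
  refine (eq_mob_of_sum_eq_zero (𝔖 := 𝔖.erase Z) (T := T)
    (fun U => mob 𝔖 T U - mob 𝔖 T Z * mob 𝔖 Z U) ?_ ?_ S hS).symm
  · rw [mob_self, mob_mul_mob_eq_zero hTZ, sub_zero]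
  · intro S' hS' hTS'
    have hvanish : mob 𝔖 T Z - mob 𝔖 T Z * mob 𝔖 Z Z = 0 := by rw [mob_self, mul_one, sub_self]
    rw [filter_erase, sum_erase (f := fun U => mob 𝔖 T U - mob 𝔖 T Z * mob 𝔖 Z U) _ hvanish,
      sum_sub_distrib, ← mul_sum,
      sum_mob_eq_zero (mem_of_mem_erase hS') hTS',
      sum_mob_eq_zero (mem_of_mem_erase hS') (ne_of_mem_erase hS').symm,
      mul_zero, sub_zero]

theorem sum_sum_mul_mob_sub_erase (Z : Finset α) (f g : Finset α → ℤ) :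
    ∑ S ∈ 𝔖, ∑ T ∈ 𝔖, f T * g S * mob 𝔖 T S
        - ∑ S ∈ 𝔖.erase Z, ∑ T ∈ 𝔖.erase Z, f T * g S * mob (𝔖.erase Z) T S
      = (∑ T ∈ 𝔖, f T * mob 𝔖 T Z) * ∑ S ∈ 𝔖, g S * mob 𝔖 Z S := by
  set h : Finset α → Finset α → ℤ := fun T S => f T * g S * (mob 𝔖 T S - mob 𝔖 T Z * mob 𝔖 Z S)
  have hleft (S : Finset α) : h Z S = 0 := by simp only [h, mob_self]; ring
  have hright (T : Finset α) : h T Z = 0 := by simp only [h, mob_self]; ring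
  have herase : ∑ S ∈ 𝔖.erase Z, ∑ T ∈ 𝔖.erase Z, f T * g S * mob (𝔖.erase Z) T S
      = ∑ S ∈ 𝔖, ∑ T ∈ 𝔖, h T S := by
    calc _ = ∑ S ∈ 𝔖.erase Z, ∑ T ∈ 𝔖.erase Z, h T S :=
          sum_congr rfl fun S hS => sum_congr rfl fun T hT => by
            rw [mob_erase hT hS]
      _ = ∑ S ∈ 𝔖.erase Z, ∑ T ∈ 𝔖, h T S :=
          sum_congr rfl fun S _ => sum_erase _ (hleft S)
      _ = ∑ S ∈ 𝔖, ∑ T ∈ 𝔖, h T S :=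
          sum_erase _ (sum_eq_zero fun T _ => hright T)
  rw [herase, sum_mul_sum, sum_comm (f := fun T S => f T * mob 𝔖 T Z * (g S * mob 𝔖 Z S)),
    ← sum_sub_distrib]
  refine sum_congr rfl fun S _ => ?_
  rw [← sum_sub_distrib]
  exact sum_congr rfl fun T _ => by simp only [h]; ring

end Mobius

theorem ec_remove_formula_general {α : Type*} [DecidableEq α]
    (E : Finset α) (rk : Finset α → ℕ)
    (𝔖 : Finset (Finset α)) (Z : Finset α) :
    ecFn 𝔖 rk (rk E) - ecFn (𝔖.erase Z) rk (rk E)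
      = aFn 𝔖 rk Z * bFn 𝔖 rk (rk E) Z :=
  sum_sum_mul_mob_sub_erase Z (cFn rk) fun S => (rk E : ℤ) - rk S

/-- Removing one set `Z` from the collection changes the expected codimension by
`a_𝔖(Z)·b_𝔖(Z)`. -/
theorem ec_remove_formula {α : Type*} [DecidableEq α]
    (E : Finset α) (rk : Finset α → ℕ) (hrk : RankAxioms E rk)
    (𝔖 : Finset (Finset α)) (h𝔖 : ∀ S ∈ 𝔖, S ⊆ E) (Z : Finset α) (hZ : Z ∈ 𝔖) :
    ecFn 𝔖 rk (rk E) - ecFn (𝔖.erase Z) rk (rk E)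
      = aFn 𝔖 rk Z * bFn 𝔖 rk (rk E) Z :=
  ec_remove_formula_general E rk 𝔖 Z
end

section
/- For a poset P, an element Z ∈ P, and elements T, S ∈ P, the difference μ_P(T,S) − μ_{P∖{Z}}(T,S) equals μ_P(T,Z)·μ_P(Z,S), where μ_{P∖{Z}}(T,S) is taken to be 0 if T = Z or S = Z. -/
/-! Induct on `S` over the finite poset `P`. Both `μ_P(T, ·)` and `μ_{P∖{Z}}(T, ·)` satisfy the
recursion `μ(T,S) = -∑_{U < S} μ(T,U)`, the latter with the term `U = Z` vanishing by convention,
so their difference at `S` is `-∑_{U < S} μ_P(T,Z) μ_P(Z,U)`; the recursion for `μ_P(Z, ·)`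
turns this into `μ_P(T,Z) μ_P(Z,S)`. -/

/-- The Möbius function of the induced subposet of `β` on the finite set `P`. -/
def mobP {β : Type*} [PartialOrder β] [DecidableEq β]
    [DecidableRel ((· ≤ ·) : β → β → Prop)] [DecidableRel ((· < ·) : β → β → Prop)]
    (P : Finset β) (T S : β) : ℤ :=
  if T = S then 1
  else if T ∈ P ∧ S ∈ P ∧ T ≤ S then
    - ∑ U ∈ (P.filter fun U => T ≤ U ∧ U < S).attach, mobP P T U.1
  else 0
termination_by (P.filter fun U => U < S).card
decreasing_by
  rcases Finset.mem_filter.mp U.2 with ⟨hUP, _, hUS⟩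
  apply Finset.card_lt_card
  rw [Finset.ssubset_iff_of_subset]
  · exact ⟨U.1, Finset.mem_filter.mpr ⟨hUP, hUS⟩,
      fun h => lt_irrefl _ (Finset.mem_filter.mp h).2⟩
  · intro x hx
    rcases Finset.mem_filter.mp hx with ⟨hxP, hxU⟩
    exact Finset.mem_filter.mpr ⟨hxP, hxU.trans hUS⟩

open Finset

section MobiusDelete

variable {β : Type*} [PartialOrder β] [DecidableEq β]
  [DecidableRel ((· ≤ ·) : β → β → Prop)] [DecidableRel ((· < ·) : β → β → Prop)]
  {P : Finset β} {T S Z : β}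

lemma mobP_self (P : Finset β) (T : β) : mobP P T T = 1 := by
  rw [mobP, if_pos rfl]

lemma mobP_of_not_le (h : ¬ T ≤ S) : mobP P T S = 0 := by
  rw [mobP, if_neg (by rintro rfl; exact h le_rfl), if_neg (by tauto)]

lemma mobP_of_notMem (hT : T ∉ P) (hTS : T ≠ S) : mobP P T S = 0 := by
  rw [mobP, if_neg hTS, if_neg (by tauto)]

lemma mobP_mul_mobP_swap (hTZ : T ≠ Z) : mobP P T Z * mobP P Z T = 0 := by
  by_cases hle : T ≤ Z
  · rw [mobP_of_not_le fun h => hTZ (le_antisymm hle h), mul_zero]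
  · rw [mobP_of_not_le hle, zero_mul]

/-- The defining recursion, with the sum over all of `{U ∈ P | U < S}`: the terms with `¬ T ≤ U`
vanish, and so does every term when `T ∉ P`. -/
lemma mobP_eq_neg_sum (hS : S ∈ P) (hTS : T ≠ S) :
    mobP P T S = -∑ U ∈ P with U < S, mobP P T U := by
  rw [mobP, if_neg hTS, sum_attach]
  split_ifs with h
  · refine congrArg _ (sum_subset (fun U hU => ?_) fun U hU hU' => mobP_of_not_le ?_)
    · simp only [mem_filter] at hU ⊢
      exact ⟨hU.1, hU.2.2⟩
    · simp only [mem_filter] at hU hU'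
      exact fun hTU => hU' ⟨hU.1, hTU, hU.2⟩
  · refine (neg_eq_zero.mpr (sum_eq_zero fun U hU => ?_)).symm
    obtain ⟨hUP, hUS⟩ := mem_filter.mp hU
    by_cases hT : T ∈ P
    · exact mobP_of_not_le fun hTU => h ⟨hT, hS, hTU.trans hUS.le⟩
    · exact mobP_of_notMem hT (ne_of_mem_of_not_mem hUP hT).symm

/-- `μ_{P∖{Z}}(T,S)`, with the convention that it is `0` when `T = Z` or `S = Z`. -/
def mobPDelete (P : Finset β) (Z T S : β) : ℤ :=
  if T = Z ∨ S = Z then 0 else mobP (P.erase Z) T S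

lemma mobPDelete_eq_neg_sum (hS : S ∈ P) (hTS : T ≠ S) (hTZ : T ≠ Z) (hSZ : S ≠ Z) :
    mobPDelete P Z T S = -∑ U ∈ P with U < S, mobPDelete P Z T U := by
  rw [mobPDelete, if_neg (by tauto), mobP_eq_neg_sum (mem_erase.mpr ⟨hSZ, hS⟩) hTS,
    filter_erase, ← sum_erase _ (show mobPDelete P Z T Z = 0 from if_pos (Or.inr rfl))]
  refine congrArg _ (sum_congr rfl fun U hU => ?_)
  rw [mobPDelete, if_neg (by simp [hTZ, ne_of_mem_erase hU])]

end MobiusDelete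

theorem mobius_delete_formula_general {β : Type*} [PartialOrder β] [DecidableEq β]
    [DecidableRel ((· ≤ ·) : β → β → Prop)] [DecidableRel ((· < ·) : β → β → Prop)]
    (P : Finset β) (Z T S : β) (hS : S ∈ P) :
    mobP P T S - (if T = Z ∨ S = Z then 0 else mobP (P.erase Z) T S)
      = mobP P T Z * mobP P Z S := by
  change mobP P T S - mobPDelete P Z T S = _
  refine (P.finite_toSet.wellFoundedOn (r := (· < ·))).induction hS
    (P := fun S => mobP P T S - mobPDelete P Z T S = mobP P T Z * mobP P Z S) fun S hS ih => ?_
  rcases eq_or_ne T Z with rfl | hTZ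
  · simp [mobPDelete, mobP_self]
  rcases eq_or_ne S Z with rfl | hSZ
  · simp [mobPDelete, mobP_self]
  rcases eq_or_ne T S with rfl | hTS
  · simp [mobPDelete, mobP_self, mobP_mul_mobP_swap hTZ, hTZ]
  calc mobP P T S - mobPDelete P Z T S
      = -∑ U ∈ P with U < S, (mobP P T U - mobPDelete P Z T U) := by
        rw [mobP_eq_neg_sum hS hTS, mobPDelete_eq_neg_sum hS hTS hTZ hSZ, sum_sub_distrib]
        ring
    _ = -∑ U ∈ P with U < S, mobP P T Z * mobP P Z U :=
        congrArg _ (sum_congr rfl fun U hU => ih U (mem_filter.mp hU).1 (mem_filter.mp hU).2)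
    _ = mobP P T Z * mobP P Z S := by
        rw [← mul_sum, mobP_eq_neg_sum hS hSZ.symm, mul_neg]

/-- Deleting one element `Z` from a finite poset changes the Möbius function by
`μ_P(T,Z)·μ_P(Z,S)`, with the convention that `μ_{P∖{Z}}(T,S) = 0` when `T = Z`
or `S = Z`. -/
theorem mobius_delete_formula {β : Type*} [PartialOrder β] [DecidableEq β]
    [DecidableRel ((· ≤ ·) : β → β → Prop)] [DecidableRel ((· < ·) : β → β → Prop)]
    (P : Finset β) (Z T S : β) (hZ : Z ∈ P) (hT : T ∈ P) (hS : S ∈ P) :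
    mobP P T S - (if T = Z ∨ S = Z then 0 else mobP (P.erase Z) T S)
      = mobP P T Z * mobP P Z S :=
  mobius_delete_formula_general P Z T S hS
end
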